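/- Let d ≥ 1 and 0 ≤ i ≤ N. Then the degree elevation matrix factors as the product of one-degree elevation matrices: E^N_{N−i} = E^N_{N−1} · E^{N−1}_{N−2} ⋯ E^{N−i+1}_{N−i} (matrix product over ℝ). Here the one-degree elevation matrix E^m_{m−1} has nonzero entries exactly (E^m_{m−1})_{β+e_j, β} = (β_j + 1)/m for multi-indices β of order m−1 and 0 ≤ j ≤ d. -/

import Mathlib

open Matrix

/-- Multi-indices of dimension `d+1` and order `N`. -/
abbrev MIdx (d N : ℕ) := {α : Fin (d + 1) → ℕ // ∑ i, α i = N}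

instance (d N : ℕ) : Fintype (MIdx d N) :=
  Fintype.subtype (Finset.Nat.antidiagonalTuple (d + 1) N) fun _ =>
    Finset.Nat.mem_antidiagonalTuple

/-- The degree elevation matrix `E^n_m` (from degree `m` to degree `n`, `m ≤ n`), with
entries `(E^n_m)_{αβ} = C^m_β ⬝ C^{n-m}_{α-β} / C^n_α` when `β ≤ α` componentwise,
and `0` otherwise. -/
noncomputable def elev (d n m : ℕ) : Matrix (MIdx d n) (MIdx d m) ℝ :=
  Matrix.of fun α β =>
    if ∀ i, β.1 i ≤ α.1 i then
      ((Nat.multinomial Finset.univ β.1 * Nat.multinomial Finset.univ (α.1 - β.1) : ℕ) : ℝ) /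
        (Nat.multinomial Finset.univ α.1 : ℝ)
    else 0

/-- The product of one-degree elevation matrices `E^N_{N-1} ⬝ E^{N-1}_{N-2} ⋯ E^{N-i+1}_{N-i}`. -/
noncomputable def elevChain (d N : ℕ) : (i : ℕ) → Matrix (MIdx d N) (MIdx d (N - i)) ℝ
  | 0 => (1 : Matrix (MIdx d (N - 0)) (MIdx d (N - 0)) ℝ)
  | i + 1 => elevChain d N i * elev d (N - i) (N - (i + 1))

/-- The multi-index `e_j` with `1` in position `j` and `0` elsewhere. -/
def eIdx (d : ℕ) (j : Fin (d + 1)) : Fin (d + 1) → ℕ := fun k => if k = j then 1 else 0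

lemma addE_order (d m : ℕ) (β : MIdx d m) (j : Fin (d + 1)) :
    ∑ k, (β.1 + eIdx d j) k = m + 1 := by
  have h : ∑ k, (β.1 k + eIdx d j k) = (∑ k, β.1 k) + ∑ k, eIdx d j k :=
    Finset.sum_add_distrib
  simp only [Pi.add_apply] at *
  rw [h, β.2]
  simp [eIdx]

/-!
Write `C(α)` for the multinomial coefficient. Conjugating by the diagonal matrix of the
`C(α)` turns `E^n_m` into the matrix `K^n_m` with entries `C(α - β)` for `β ≤ α`, so the
conjugating factors cancel in `E^n_{m+1} E^{m+1}_m` and it suffices to show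
`K^n_{m+1} K^{m+1}_m = K^n_m`. Column `γ` of `K^{m+1}_m` has the entries `1` at the rows
`γ + e_j` and vanishes elsewhere, so this is Pascal's rule
`C(δ) = ∑_{δ_j ≠ 0} C(δ - e_j)` for `δ = α - γ ≠ 0`.
-/

open Finset Nat

namespace Nat

variable {ι : Type*} [Fintype ι] [DecidableEq ι]

theorem prod_factorial_add_single (f : ι → ℕ) (j : ι) :
    ∏ i, (f i + (Pi.single j 1 : ι → ℕ) i)! = (f j + 1) * ∏ i, (f i)! := by
  have h : ∀ i, (f i + (Pi.single j 1 : ι → ℕ) i)! = (f i)! * if i = j then f j + 1 else 1 := by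
    intro i
    by_cases hij : i = j
    · subst hij
      simp [factorial_succ, mul_comm]
    · simp [hij]
  rw [Fintype.prod_congr _ _ h, prod_mul_distrib, prod_ite_eq', if_pos (mem_univ j), mul_comm]

theorem succ_mul_multinomial_add_single (f : ι → ℕ) (j : ι) :
    (f j + 1) * multinomial univ (f + Pi.single j 1) = (∑ i, f i + 1) * multinomial univ f := by
  have hspec := multinomial_spec univ (f + Pi.single j 1)
  simp only [Pi.add_apply, sum_add_distrib, prod_factorial_add_single, sum_pi_single',
    mem_univ, if_true, factorial_succ, ← multinomial_spec univ f] at hspec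
  apply Nat.eq_of_mul_eq_mul_left (prod_pos fun i (_ : i ∈ univ) => factorial_pos (f i))
  linarith

theorem sum_mul_multinomial_sub_single {δ : ι → ℕ} {j : ι} (hj : δ j ≠ 0) :
    (∑ i, δ i) * multinomial univ (δ - Pi.single j 1) = δ j * multinomial univ δ := by
  have hδ : δ - Pi.single j 1 + Pi.single j 1 = δ := by
    ext i
    by_cases hij : i = j
    · subst hij
      simp only [Pi.add_apply, Pi.sub_apply, Pi.single_eq_same]
      omega
    · simp [hij]
  have hsum : ∑ i, δ i = ∑ i, (δ - Pi.single j 1 : ι → ℕ) i + 1 := by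
    conv_lhs => rw [← hδ]
    simp [sum_add_distrib]
  have key := succ_mul_multinomial_add_single (δ - Pi.single j 1) j
  rw [hδ, Pi.sub_apply, Pi.single_eq_same, Nat.sub_add_cancel (Nat.one_le_iff_ne_zero.mpr hj)]
    at key
  rw [hsum, key]

theorem multinomial_eq_sum_sub_single {δ : ι → ℕ} (hδ : δ ≠ 0) :
    multinomial univ δ = ∑ j with δ j ≠ 0, multinomial univ (δ - Pi.single j 1) := by
  have hpos : 0 < ∑ i, δ i := by
    obtain ⟨i, hi⟩ := Function.ne_iff.mp hδ
    exact (Nat.pos_of_ne_zero hi).trans_le (single_le_sum (fun _ _ => Nat.zero_le _) (mem_univ i))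
  apply Nat.eq_of_mul_eq_mul_left hpos
  rw [mul_sum, sum_congr rfl fun j hj => sum_mul_multinomial_sub_single (mem_filter.mp hj).2,
    sum_filter_of_ne (fun j _ h => left_ne_zero_of_mul h), ← sum_mul]

end Nat

lemma eIdx_eq_single (d : ℕ) (j : Fin (d + 1)) : eIdx d j = Pi.single j 1 := by
  ext k
  simp [eIdx, Pi.single_apply]

namespace MIdx

variable {d m n : ℕ}

def incr (β : MIdx d m) (j : Fin (d + 1)) : MIdx d (m + 1) :=
  ⟨β.1 + eIdx d j, addE_order d m β j⟩

lemma incr_val (β : MIdx d m) (j : Fin (d + 1)) : (β.incr j).1 = β.1 + Pi.single j 1 :=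
  congrArg (β.1 + ·) (eIdx_eq_single d j)

lemma incr_injective (β : MIdx d m) : Function.Injective β.incr := by
  intro j k hjk
  have := congrFun (congrArg Subtype.val hjk) j
  by_contra hne
  simp [incr_val, hne] at this

lemma le_incr (β : MIdx d m) (j : Fin (d + 1)) : β.1 ≤ (β.incr j).1 := by
  simp [incr_val]

lemma eq_of_le {α β : MIdx d n} (h : β.1 ≤ α.1) : β = α :=
  Subtype.ext <| funext fun i =>
    (sum_eq_sum_iff_of_le fun i _ => h i).mp (β.2.trans α.2.symm) i (mem_univ i)

lemma exists_eq_incr_of_le {γ : MIdx d m} {β : MIdx d (m + 1)} (h : γ.1 ≤ β.1) :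
    ∃ j, β = γ.incr j := by
  obtain ⟨j, hj⟩ : ∃ j, γ.1 j < β.1 j := by
    by_contra! hge
    have := sum_le_sum fun i (_ : i ∈ univ) => hge i
    rw [β.2, γ.2] at this
    omega
  refine ⟨j, (eq_of_le fun i => ?_).symm⟩
  by_cases hij : i = j
  · subst hij
    simpa [incr_val] using hj
  · simpa [incr_val, hij] using h i

end MIdx

open Classical in
noncomputable def subMultinomial (d n m : ℕ) : Matrix (MIdx d n) (MIdx d m) ℝ :=
  of fun α β => if β.1 ≤ α.1 then (multinomial univ (α.1 - β.1) : ℝ) else 0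

section subMultinomial

variable {d m n : ℕ}

lemma subMultinomial_incr_self (γ : MIdx d m) (j : Fin (d + 1)) :
    subMultinomial d (m + 1) m (γ.incr j) γ = 1 := by
  rw [subMultinomial, of_apply, if_pos (γ.le_incr j), MIdx.incr_val, add_tsub_cancel_left,
    multinomial_single, cast_one]

lemma subMultinomial_succ_apply_eq_zero {α : MIdx d (m + 1)} {γ : MIdx d m}
    (h : α ∉ Set.range γ.incr) : subMultinomial d (m + 1) m α γ = 0 := by
  refine if_neg fun hle => h ?_
  obtain ⟨j, rfl⟩ := MIdx.exists_eq_incr_of_le hle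
  exact ⟨j, rfl⟩

lemma subMultinomial_self : subMultinomial d n n = 1 := by
  ext α β
  by_cases hαβ : α = β
  · subst hαβ
    simp [subMultinomial, multinomial]
  · rw [one_apply_ne hαβ]
    exact if_neg fun hle => hαβ (MIdx.eq_of_le hle).symm

lemma subMultinomial_mul_subMultinomial_succ (h : m < n) :
    subMultinomial d n (m + 1) * subMultinomial d (m + 1) m = subMultinomial d n m := by
  ext α γ
  rw [mul_apply, ← Fintype.sum_of_injective γ.incr γ.incr_injective
    (fun j => subMultinomial d n (m + 1) α (γ.incr j))
    _ (fun β hβ => by rw [subMultinomial_succ_apply_eq_zero hβ, mul_zero])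
    (fun j => by rw [subMultinomial_incr_self, mul_one])]
  simp only [subMultinomial, of_apply, MIdx.incr_val]
  by_cases hle : γ.1 ≤ α.1
  · have hne : α.1 - γ.1 ≠ 0 := fun h0 => by
      have := sum_le_sum fun i (_ : i ∈ univ) => (tsub_eq_zero_iff_le.mp h0 : α.1 ≤ γ.1) i
      rw [α.2, γ.2] at this
      omega
    have hcond : ∀ j, (γ.incr j).1 ≤ α.1 ↔ (α.1 - γ.1) j ≠ 0 := by
      refine fun j => MIdx.incr_val γ j ▸ ⟨fun h' => ?_, fun h' i => ?_⟩
      · have := h' j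
        simp only [Pi.add_apply, Pi.single_eq_same, Pi.sub_apply] at this ⊢
        omega
      · by_cases hij : i = j
        · subst hij
          simp only [Pi.add_apply, Pi.single_eq_same, Pi.sub_apply] at h' ⊢
          omega
        · simpa [hij] using hle i
    rw [if_pos hle, multinomial_eq_sum_sub_single hne, cast_sum, sum_filter]
    refine sum_congr rfl fun j _ => ?_
    classical
    rw [tsub_add_eq_tsub_tsub]
    exact if_congr (hcond j) rfl rfl
  · rw [if_neg hle]
    exact sum_eq_zero fun j _ => if_neg fun h' => hle (le_self_add.trans h')

end subMultinomial

section elev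

variable {d m n : ℕ}

lemma multinomial_cast_ne_zero (α : MIdx d n) : (multinomial univ α.1 : ℝ) ≠ 0 :=
  cast_ne_zero.mpr (multinomial_pos _ _).ne'

lemma elev_eq_diagonal_mul_subMultinomial_mul_diagonal :
    elev d n m = diagonal (fun α : MIdx d n => (multinomial univ α.1 : ℝ)⁻¹) *
      subMultinomial d n m * diagonal (fun β : MIdx d m => (multinomial univ β.1 : ℝ)) := by
  ext α β
  rw [mul_diagonal, diagonal_mul, elev, subMultinomial, of_apply, of_apply]
  split_ifs with h₁ h₂ h₂
  · push_cast
    ring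
  · exact absurd (Pi.le_def.mpr h₁) h₂
  · exact absurd (Pi.le_def.mp h₂) h₁
  · simp

lemma diagonal_multinomial_mul_inv :
    diagonal (fun α : MIdx d n => (multinomial univ α.1 : ℝ)) *
      diagonal (fun α => (multinomial univ α.1 : ℝ)⁻¹) = 1 := by
  rw [diagonal_mul_diagonal, ← diagonal_one]
  exact congrArg diagonal (funext fun α => mul_inv_cancel₀ (multinomial_cast_ne_zero α))

lemma elev_self : elev d n n = 1 := by
  rw [elev_eq_diagonal_mul_subMultinomial_mul_diagonal, subMultinomial_self, Matrix.mul_one,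
    diagonal_mul_diagonal, ← diagonal_one]
  exact congrArg diagonal (funext fun α => inv_mul_cancel₀ (multinomial_cast_ne_zero α))

lemma elev_mul_elev_succ (h : m < n) : elev d n (m + 1) * elev d (m + 1) m = elev d n m := by
  simp only [elev_eq_diagonal_mul_subMultinomial_mul_diagonal, Matrix.mul_assoc]
  rw [← Matrix.mul_assoc (diagonal _) (diagonal _), diagonal_multinomial_mul_inv, Matrix.one_mul,
    ← Matrix.mul_assoc (subMultinomial d n (m + 1)), subMultinomial_mul_subMultinomial_succ h]

lemma elev_incr_self (γ : MIdx d m) (j : Fin (d + 1)) :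
    elev d (m + 1) m (γ.incr j) γ = ((γ.1 j : ℝ) + 1) / ((m : ℝ) + 1) := by
  have key := succ_mul_multinomial_add_single γ.1 j
  rw [γ.2, ← MIdx.incr_val] at key
  have hC := multinomial_cast_ne_zero (γ.incr j)
  rw [elev_eq_diagonal_mul_subMultinomial_mul_diagonal, mul_diagonal, diagonal_mul,
    subMultinomial_incr_self, eq_div_iff (by positivity)]
  field_simp
  exact_mod_cast (mul_comm _ _).trans (key.symm.trans (mul_comm _ _))

lemma elev_succ_apply_eq_zero {α : MIdx d (m + 1)} {γ : MIdx d m} (h : α ∉ Set.range γ.incr) :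
    elev d (m + 1) m α γ = 0 := by
  rw [elev_eq_diagonal_mul_subMultinomial_mul_diagonal, mul_diagonal, diagonal_mul,
    subMultinomial_succ_apply_eq_zero h, mul_zero, zero_mul]

end elev

lemma elev_eq_elevChain (d N i : ℕ) : elev d N (N - i) = elevChain d N i := by
  induction i with
  | zero => exact elev_self
  | succ i ih =>
    rw [elevChain, ← ih]
    obtain hiN | hNi := lt_or_ge i N
    · rw [show N - i = N - (i + 1) + 1 by omega]
      exact (elev_mul_elev_succ (by omega)).symm
    · -- past `i = N` both degrees truncate to `0`
      rw [show N - i = 0 by omega, show N - (i + 1) = 0 by omega, elev_self, Matrix.mul_one]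

theorem elev_eq_chain_general (d N i : ℕ) :
    elev d N (N - i) = elevChain d N i ∧
      (∀ (m : ℕ) (β : MIdx d m) (j : Fin (d + 1)),
          elev d (m + 1) m ⟨β.1 + eIdx d j, addE_order d m β j⟩ β =
            ((β.1 j : ℝ) + 1) / ((m : ℝ) + 1)) ∧
      (∀ (m : ℕ) (α : MIdx d (m + 1)) (β : MIdx d m),
          (¬ ∃ j, α.1 = β.1 + eIdx d j) → elev d (m + 1) m α β = 0) :=
  ⟨elev_eq_elevChain d N i, fun _ β j => elev_incr_self β j,
    fun _ _ _ h => elev_succ_apply_eq_zero fun ⟨j, hj⟩ => h ⟨j, congrArg Subtype.val hj.symm⟩⟩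

/-- For `0 ≤ i ≤ N`, the degree elevation matrix factors as the product of
one-degree elevation matrices: `E^N_{N-i} = E^N_{N-1} ⬝ E^{N-1}_{N-2} ⋯ E^{N-i+1}_{N-i}`.
Here the one-degree elevation matrix `E^m_{m-1}` has nonzero entries exactly
`(E^{m+1}_m)_{β+e_j, β} = (β_j + 1)/(m+1)`. -/
theorem elev_eq_chain (d N i : ℕ) (hd : 1 ≤ d) (hi : i ≤ N) :
    elev d N (N - i) = elevChain d N i ∧
      (∀ (m : ℕ) (β : MIdx d m) (j : Fin (d + 1)),
          elev d (m + 1) m ⟨β.1 + eIdx d j, addE_order d m β j⟩ β =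
            ((β.1 j : ℝ) + 1) / ((m : ℝ) + 1)) ∧
      (∀ (m : ℕ) (α : MIdx d (m + 1)) (β : MIdx d m),
          (¬ ∃ j, α.1 = β.1 + eIdx d j) → elev d (m + 1) m α β = 0) :=
  elev_eq_chain_general d N i
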